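/- The canonical embedding of a Banach lattice V into its double dual V** is a lattice homomorphism: J(x ⊔ y) = Jx ⊔ Jy for all x, y in V. -/

import Mathlib

/-!
Monotonicity of positive functionals gives `J x, J y ≤ J (x ⊔ y)`. For minimality one must show
`f (x ⊔ y) ≤ μ f` for every positive `f` and every upper bound `μ` of `J x` and `J y`. Hahn–Banach,
applied to the sublinear functional `v ↦ f v⁺`, splits `f = g + (f - g)` into two positive
functionals with `g (x - y) = f (x - y)⁺`. Since `x ⊔ y = y + (x - y)⁺`, this gives
`f (x ⊔ y) = g x + (f - g) y ≤ μ g + μ (f - g) = μ f`.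
-/

variable {V : Type*} [NormedAddCommGroup V] [Lattice V] [HasSolidNorm V]
  [IsOrderedAddMonoid V] [NormedSpace ℝ V]
  [PosSMulMono ℝ V] [CompleteSpace V]

/-- The canonical order on the double dual: `μ ≤ ν` iff `μ f ≤ ν f` for every
positive continuous functional `f` on `V`. -/
def DoubleDualLE (μ ν : StrongDual ℝ (StrongDual ℝ V)) : Prop :=
  ∀ f : StrongDual ℝ V, (∀ y : V, 0 ≤ y → 0 ≤ f y) → μ f ≤ ν f

theorem exists_linearMap_le_sublinear_eq {E : Type*} [AddCommGroup E] [Module ℝ E] (N : E → ℝ)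
    (N_hom : ∀ c : ℝ, 0 < c → ∀ x, N (c • x) = c * N x) (N_add : ∀ x y, N (x + y) ≤ N x + N y)
    (u : E) : ∃ g : E →ₗ[ℝ] ℝ, (∀ x, g x ≤ N x) ∧ g u = N u := by
  have N_zero : N 0 = 0 := by
    have := N_hom 2 two_pos 0
    rw [smul_zero] at this
    linarith
  have smul_le : ∀ (c : ℝ) (x : E), c * N x ≤ N (c • x) := by
    intro c x
    rcases lt_trichotomy c 0 with hc | rfl | hc
    · have := N_add (c • x) ((-c) • x)
      rw [← add_smul, add_neg_cancel, zero_smul, N_zero, N_hom (-c) (neg_pos.2 hc)] at this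
      linarith
    · simp [N_zero]
    · rw [N_hom c hc]
  let p : E →ₗ.[ℝ] ℝ := LinearPMap.mkSpanSingleton' u (N u) fun c hc => by
    rcases smul_eq_zero.1 hc with rfl | rfl <;> simp [N_zero]
  have p_le : ∀ x : p.domain, p x ≤ N x := by
    rintro ⟨x, hx⟩
    obtain ⟨c, rfl⟩ := Submodule.mem_span_singleton.1 hx
    rw [LinearPMap.mkSpanSingleton'_apply]
    exact smul_le c u
  obtain ⟨g, hg_eq, hg_le⟩ := exists_extension_of_le_sublinear p N N_hom N_add p_le
  exact ⟨g, hg_le, (hg_eq ⟨u, Submodule.mem_span_singleton_self u⟩).trans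
    (LinearPMap.mkSpanSingleton'_apply_self _ _ _ _)⟩

section PosPart

variable {E : Type*} [AddCommGroup E] [Lattice E]

theorem posPart_add_le [IsOrderedAddMonoid E] (a b : E) : (a + b)⁺ ≤ a⁺ + b⁺ :=
  sup_le (add_le_add (le_posPart a) (le_posPart b))
    (add_nonneg (posPart_nonneg a) (posPart_nonneg b))

theorem posPart_smul_of_nonneg [Module ℝ E] [PosSMulMono ℝ E] {c : ℝ} (hc : 0 ≤ c) (a : E) :
    (c • a)⁺ = c • a⁺ := by
  rcases hc.eq_or_lt with rfl | hc
  · simp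
  · have := (OrderIso.smulRight (β := E) hc).map_sup a 0
    simp only [OrderIso.smulRight_apply, smul_zero] at this
    rw [posPart_def, posPart_def, this]

end PosPart

theorem norm_posPart_le {E : Type*} [NormedAddCommGroup E] [Lattice E] [HasSolidNorm E]
    [IsOrderedAddMonoid E] (a : E) : ‖a⁺‖ ≤ ‖a‖ := by
  refine (norm_le_norm_of_abs_le_abs ?_).trans_eq (norm_abs_eq_norm a)
  rw [abs_of_nonneg (posPart_nonneg a), abs_abs]
  exact sup_le (le_abs_self a) (abs_nonneg a)

section PositiveFunctional

variable {E : Type*} [NormedAddCommGroup E] [Lattice E] [HasSolidNorm E]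
  [IsOrderedAddMonoid E] [NormedSpace ℝ E] [PosSMulMono ℝ E]

theorem exists_pos_and_sub_pos_apply_eq_apply_posPart (f : StrongDual ℝ E)
    (hf : ∀ v : E, 0 ≤ v → 0 ≤ f v) (u : E) : ∃ g : StrongDual ℝ E, (∀ v : E, 0 ≤ v → 0 ≤ g v) ∧
      (∀ v : E, 0 ≤ v → 0 ≤ (f - g) v) ∧ g u = f u⁺ := by
  have f_mono : Monotone f := (monotone_iff_map_nonneg f).2 hf
  obtain ⟨g, hg_le, hg_u⟩ := exists_linearMap_le_sublinear_eq (fun v => f v⁺)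
    (fun c hc v => by simp only [posPart_smul_of_nonneg hc.le, map_smul, smul_eq_mul])
    (fun v w => (f_mono (posPart_add_le v w)).trans_eq (map_add f _ _)) u
  have hg_bound : ∀ v, g v ≤ ‖f‖ * ‖v‖ := fun v =>
    calc g v ≤ f v⁺ := hg_le v
      _ ≤ ‖f‖ * ‖v⁺‖ := (le_abs_self _).trans (f.le_opNorm _)
      _ ≤ ‖f‖ * ‖v‖ := by gcongr; exact norm_posPart_le v
  refine ⟨g.mkContinuous ‖f‖ fun v => abs_le.2 ⟨?_, hg_bound v⟩, fun v hv => ?_, fun v hv => ?_,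
    hg_u⟩
  · simpa [neg_le] using hg_bound (-v)
  · simpa [posPart_eq_zero.2 (neg_nonpos.2 hv)] using hg_le (-v)
  · simpa [posPart_eq_self.2 hv] using hg_le v

end PositiveFunctional

/-- The canonical embedding into the double dual is a lattice homomorphism:
`J (x ⊔ y)` is the least upper bound of `J x` and `J y` for the canonical
order on `V**`. -/
theorem inclusionInDoubleDual_latticeHom (x y : V) :
    DoubleDualLE (NormedSpace.inclusionInDoubleDual ℝ V x)
        (NormedSpace.inclusionInDoubleDual ℝ V (x ⊔ y)) ∧
      DoubleDualLE (NormedSpace.inclusionInDoubleDual ℝ V y)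
        (NormedSpace.inclusionInDoubleDual ℝ V (x ⊔ y)) ∧
      ∀ μ : StrongDual ℝ (StrongDual ℝ V),
        DoubleDualLE (NormedSpace.inclusionInDoubleDual ℝ V x) μ →
        DoubleDualLE (NormedSpace.inclusionInDoubleDual ℝ V y) μ →
        DoubleDualLE (NormedSpace.inclusionInDoubleDual ℝ V (x ⊔ y)) μ := by
  simp only [DoubleDualLE, NormedSpace.dual_def]
  refine ⟨fun f hf => (monotone_iff_map_nonneg f).2 hf le_sup_left,
    fun f hf => (monotone_iff_map_nonneg f).2 hf le_sup_right, fun μ hx hy f hf => ?_⟩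
  obtain ⟨g, hg, hfg, hg_xy⟩ := exists_pos_and_sub_pos_apply_eq_apply_posPart f hf (x - y)
  calc f (x ⊔ y) = g x + (f - g) y := by
        rw [sup_eq_add_posPart_sub, map_add, ← hg_xy, map_sub, sub_apply]
        ring
    _ ≤ μ g + μ (f - g) := add_le_add (hx g hg) (hy (f - g) hfg)
    _ = μ f := by rw [← map_add, add_sub_cancel]
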